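/- Define points x_{k,j} = (r sin φ_k cos θ_{k,j}, r sin φ_k sin θ_{k,j}, r cos φ_k) with φ_k = π/2 + πk/(2n) for k = −n,...,n and θ_{k,j} = 2πj/(n sin φ_k) for j = 1,...,⌊n sin φ_k⌋. Then any two distinct points x_{k,i}, x_{m,j} in this family satisfy ‖x_{k,i} − x_{m,j}‖ ≥ r/n. -/

import Mathlib

/-! Points on different latitudes `φ_k ≠ φ_m` are at least as far apart as the chord
`2r |sin ((φ_k - φ_m)/2)|`, and `|k - m| ≥ 1` makes this `≥ r/n`. Points on the same latitude
`φ` are at distance `2r sin φ |sin ((θ_i - θ_j)/2)|`, where `(θ_i - θ_j)/2 = π(i - j)/S`,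
`S = n sin φ`, and `1 ≤ |i - j| ≤ S - 1` keeps this angle at distance `≥ π/S` from `0` and `π`.
Both bounds then follow from Jordan's inequality `sin x ≥ 2x/π` on `[0, π/2]`. -/

open Real

noncomputable def vec3 (a b c : ℝ) : EuclideanSpace ℝ (Fin 3) :=
  (WithLp.equiv 2 (Fin 3 → ℝ)).symm ![a, b, c]

lemma norm_vec3_sub_sq (a b c a' b' c' : ℝ) :
    ‖vec3 a b c - vec3 a' b' c'‖ ^ 2 = (a - a') ^ 2 + (b - b') ^ 2 + (c - c') ^ 2 := by
  rw [EuclideanSpace.norm_eq, Real.sq_sqrt (by positivity)]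
  simp [vec3, Fin.sum_univ_three, sq_abs]

lemma one_sub_cos_eq_two_mul_sin_half_sq (x : ℝ) : 1 - cos x = 2 * sin (x / 2) ^ 2 := by
  have h := cos_two_mul' (x / 2)
  rw [mul_div_cancel₀ x two_ne_zero] at h
  linear_combination -h - sin_sq_add_cos_sq (x / 2)

lemma two_div_pi_mul_min_le_sin {x : ℝ} (h0 : 0 ≤ x) (hπ : x ≤ π) :
    2 / π * min x (π - x) ≤ sin x := by
  rcases le_total x (π / 2) with h | h
  · exact (mul_le_mul_of_nonneg_left (min_le_left _ _) (by positivity)).trans (mul_le_sin h0 h)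
  · rw [← sin_pi_sub]
    exact (mul_le_mul_of_nonneg_left (min_le_right _ _) (by positivity)).trans
      (mul_le_sin (by linarith) (by linarith))

lemma two_div_le_abs_sin_pi_mul_div {S d : ℝ} (h1 : 1 ≤ |d|) (h2 : |d| ≤ S - 1) :
    2 / S ≤ |sin (π * d / S)| := by
  have hS : 0 < S := by linarith
  have habs : |π * d / S| = π * |d| / S := by
    rw [abs_div, abs_mul, abs_of_pos pi_pos, abs_of_pos hS]
  have hle : π * |d| / S ≤ π := by
    rw [div_le_iff₀ hS]; nlinarith [pi_pos]
  have hmin : π / S ≤ min (π * |d| / S) (π - π * |d| / S) := by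
    refine le_min ?_ ?_
    · exact div_le_div_of_nonneg_right (le_mul_of_one_le_right pi_pos.le h1) hS.le
    · rw [show π - π * |d| / S = π * (S - |d|) / S by field_simp]
      exact div_le_div_of_nonneg_right (le_mul_of_one_le_right pi_pos.le (by linarith)) hS.le
  rw [abs_sin_eq_sin_abs_of_abs_le_pi (habs ▸ hle), habs]
  calc 2 / S = 2 / π * (π / S) := by field_simp
    _ ≤ 2 / π * min (π * |d| / S) (π - π * |d| / S) := by gcongr
    _ ≤ _ := two_div_pi_mul_min_le_sin (by positivity) hle

noncomputable def sphericalPoint (r φ θ : ℝ) : EuclideanSpace ℝ (Fin 3) :=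
  vec3 (r * sin φ * cos θ) (r * sin φ * sin θ) (r * cos φ)

lemma norm_sphericalPoint_sub_sq (r φ θ ψ η : ℝ) :
    ‖sphericalPoint r φ θ - sphericalPoint r ψ η‖ ^ 2
      = 2 * r ^ 2 * (1 - (sin φ * sin ψ * cos (θ - η) + cos φ * cos ψ)) := by
  rw [sphericalPoint, sphericalPoint, norm_vec3_sub_sq, cos_sub]
  linear_combination (r ^ 2 * sin φ ^ 2) * sin_sq_add_cos_sq θ
    + (r ^ 2 * sin ψ ^ 2) * sin_sq_add_cos_sq η
    + r ^ 2 * sin_sq_add_cos_sq φ + r ^ 2 * sin_sq_add_cos_sq ψ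

lemma norm_sphericalPoint_sub_of_eq_latitude (r φ θ η : ℝ) :
    ‖sphericalPoint r φ θ - sphericalPoint r φ η‖ = 2 * |r| * |sin φ| * |sin ((θ - η) / 2)| := by
  refine (sq_eq_sq₀ (norm_nonneg _) (by positivity)).1 ?_
  rw [norm_sphericalPoint_sub_sq, mul_pow, mul_pow, mul_pow, sq_abs, sq_abs, sq_abs]
  linear_combination (2 * r ^ 2 * sin φ ^ 2) * one_sub_cos_eq_two_mul_sin_half_sq (θ - η)
    - 2 * r ^ 2 * sin_sq_add_cos_sq φ

lemma two_mul_abs_mul_abs_sin_half_sub_le_norm_sphericalPoint_sub {φ ψ : ℝ}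
    (h : 0 ≤ sin φ * sin ψ) (r θ η : ℝ) :
    2 * |r| * |sin ((φ - ψ) / 2)| ≤ ‖sphericalPoint r φ θ - sphericalPoint r ψ η‖ := by
  refine (sq_le_sq₀ (by positivity) (norm_nonneg _)).1 ?_
  have hcos : sin φ * sin ψ * cos (θ - η) ≤ sin φ * sin ψ :=
    mul_le_of_le_one_right h (cos_le_one _)
  have hlat := one_sub_cos_eq_two_mul_sin_half_sq (φ - ψ)
  rw [cos_sub] at hlat
  rw [norm_sphericalPoint_sub_sq, mul_pow, mul_pow, sq_abs, sq_abs]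
  nlinarith [sq_nonneg r]

lemma div_le_norm_sphericalPoint_sub_of_eq_latitude {N φ a b : ℝ} (hN : 0 < N)
    (ha : 1 ≤ a) (haN : a ≤ N * sin φ) (hb : 1 ≤ b) (hbN : b ≤ N * sin φ) (hab : 1 ≤ |a - b|)
    (r : ℝ) :
    4 * |r| / N ≤ ‖sphericalPoint r φ (2 * π * a / (N * sin φ))
      - sphericalPoint r φ (2 * π * b / (N * sin φ))‖ := by
  have hs : 0 < sin φ := pos_of_mul_pos_right (a := N) (by linarith) hN.le
  have hsin := two_div_le_abs_sin_pi_mul_div hab (S := N * sin φ)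
    (by rw [abs_le]; constructor <;> linarith)
  rw [norm_sphericalPoint_sub_of_eq_latitude, abs_of_pos hs,
    show (2 * π * a / (N * sin φ) - 2 * π * b / (N * sin φ)) / 2
      = π * (a - b) / (N * sin φ) by ring]
  calc 4 * |r| / N = 2 * |r| * sin φ * (2 / (N * sin φ)) := by field_simp; ring
    _ ≤ _ := by gcongr

lemma sin_pi_div_two_add_nonneg {N c : ℝ} (hN : 0 < N) (hc : |c| ≤ N) :
    0 ≤ sin (π / 2 + π * c / (2 * N)) := by
  have h : |π * c / (2 * N)| ≤ π / 2 := by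
    rw [abs_div, abs_mul, abs_of_pos pi_pos, abs_of_pos (by positivity : (0 : ℝ) < 2 * N),
      div_le_iff₀ (by positivity)]
    nlinarith [pi_pos]
  obtain ⟨h₁, h₂⟩ := abs_le.1 h
  exact sin_nonneg_of_nonneg_of_le_pi (by linarith) (by linarith)

lemma div_le_norm_sphericalPoint_sub_of_ne_latitude {N a b : ℝ} (ha : |a| ≤ N) (hb : |b| ≤ N)
    (hab : 1 ≤ |a - b|) (r θ η : ℝ) :
    |r| / N ≤ ‖sphericalPoint r (π / 2 + π * a / (2 * N)) θ
      - sphericalPoint r (π / 2 + π * b / (2 * N)) η‖ := by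
  have hab' : |a - b| ≤ 2 * N := (abs_sub _ _).trans (by linarith)
  have hN : 0 < N := by linarith
  have hsin := two_div_le_abs_sin_pi_mul_div hab (S := 4 * N) (by linarith)
  refine le_trans ?_ (two_mul_abs_mul_abs_sin_half_sub_le_norm_sphericalPoint_sub
    (mul_nonneg (sin_pi_div_two_add_nonneg hN ha) (sin_pi_div_two_add_nonneg hN hb)) r θ η)
  rw [show (π / 2 + π * a / (2 * N) - (π / 2 + π * b / (2 * N))) / 2 = π * (a - b) / (4 * N) by
    ring]
  calc |r| / N = 2 * |r| * (2 / (4 * N)) := by field_simp; ring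
    _ ≤ _ := by gcongr

theorem stmt16_general (r : ℝ) (n : ℕ)
    (φ : ℤ → ℝ) (hφ : φ = fun (k : ℤ) => π / 2 + π * (k : ℝ) / (2 * n))
    (θ : ℤ → ℕ → ℝ) (hθ : θ = fun (k : ℤ) (j : ℕ) => 2 * π * (j : ℝ) / (n * Real.sin (φ k)))
    (x : ℤ → ℕ → EuclideanSpace ℝ (Fin 3))
    (hx : x = fun (k : ℤ) (j : ℕ) => vec3 (r * Real.sin (φ k) * Real.cos (θ k j))
      (r * Real.sin (φ k) * Real.sin (θ k j)) (r * Real.cos (φ k))) :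
    ∀ k m : ℤ, ∀ i j : ℕ,
      -(n : ℤ) ≤ k → k ≤ n → -(n : ℤ) ≤ m → m ≤ n →
      1 ≤ i → (i : ℝ) ≤ n * Real.sin (φ k) →
      1 ≤ j → (j : ℝ) ≤ n * Real.sin (φ m) →
      (k, i) ≠ (m, j) →
      r / n ≤ ‖x k i - x m j‖ := by
  intro k m i j hk₁ hk₂ hm₁ hm₂ hi₁ hi₂ hj₁ hj₂ hne
  subst hx hθ hφ
  have hi : (1 : ℝ) ≤ i := by exact_mod_cast hi₁
  have hj : (1 : ℝ) ≤ j := by exact_mod_cast hj₁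
  have hn : (0 : ℝ) < n := by nlinarith [sin_le_one (π / 2 + π * (k : ℝ) / (2 * n))]
  have hr : r / n ≤ |r| / n := by gcongr; exact le_abs_self r
  rcases eq_or_ne k m with rfl | hkm
  · have hij : (i : ℤ) ≠ j := fun h => hne (by rw [Int.natCast_inj.1 h])
    have hij' : (1 : ℝ) ≤ |(i : ℝ) - j| := by exact_mod_cast Int.one_le_abs (sub_ne_zero.2 hij)
    refine le_trans ?_ (div_le_norm_sphericalPoint_sub_of_eq_latitude hn hi hi₂ hj hj₂ hij' r)
    exact hr.trans (div_le_div_of_nonneg_right (by linarith [abs_nonneg r]) hn.le)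
  · have hkm' : (1 : ℝ) ≤ |(k : ℝ) - m| := by exact_mod_cast Int.one_le_abs (sub_ne_zero.2 hkm)
    have hk : |(k : ℝ)| ≤ n := abs_le.2 ⟨by exact_mod_cast hk₁, by exact_mod_cast hk₂⟩
    have hm : |(m : ℝ)| ≤ n := abs_le.2 ⟨by exact_mod_cast hm₁, by exact_mod_cast hm₂⟩
    exact hr.trans (div_le_norm_sphericalPoint_sub_of_ne_latitude hk hm hkm' r _ _)

/-- The approximately equally spaced points
`x_{k,j} = (r sin φ_k cos θ_{k,j}, r sin φ_k sin θ_{k,j}, r cos φ_k)` with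
`φ_k = π/2 + πk/(2n)` for `−n ≤ k ≤ n` and `θ_{k,j} = 2πj/(n sin φ_k)` for
`1 ≤ j ≤ ⌊n sin φ_k⌋` are `r/n`-separated: any two distinct points of the
family lie at distance at least `r/n`. -/
theorem stmt16 (r : ℝ) (hr : 0 < r) (n : ℕ) (hn : 1 ≤ n)
    (φ : ℤ → ℝ) (hφ : φ = fun (k : ℤ) => π / 2 + π * (k : ℝ) / (2 * n))
    (θ : ℤ → ℕ → ℝ) (hθ : θ = fun (k : ℤ) (j : ℕ) => 2 * π * (j : ℝ) / (n * Real.sin (φ k)))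
    (x : ℤ → ℕ → EuclideanSpace ℝ (Fin 3))
    (hx : x = fun (k : ℤ) (j : ℕ) => vec3 (r * Real.sin (φ k) * Real.cos (θ k j))
      (r * Real.sin (φ k) * Real.sin (θ k j)) (r * Real.cos (φ k))) :
    ∀ k m : ℤ, ∀ i j : ℕ,
      -(n : ℤ) ≤ k → k ≤ n → -(n : ℤ) ≤ m → m ≤ n →
      1 ≤ i → (i : ℝ) ≤ n * Real.sin (φ k) →
      1 ≤ j → (j : ℝ) ≤ n * Real.sin (φ m) →
      (k, i) ≠ (m, j) →
      r / n ≤ ‖x k i - x m j‖ :=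
  stmt16_general r n φ hφ θ hθ x hx
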